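/- Let S_1,...,S_k be the groups of an optimal 1-dimensional k-means partition of a finite multiset of points contained in [-C, C]. Then the groups are contiguous (each group is the set of points lying in some interval, and the intervals for distinct groups have disjoint interiors), and consequently the sum over l of diam(S_l) is at most 2C, where diam(S) = max_{a,b in S} |a - b|. -/

import Mathlib

/-! Fisher's exchange argument. Suppose a point `i` lies to the right of a point `j` of another
group although the mean of its group is at most the mean of the group of `j`. Exchanging their
groups does not increase the cost measured against the old means, and it strictly moves the
mean of the group of `i`; since a group's mean is its unique best center, the new partition is
strictly cheaper. So in an optimal partition the groups occupy intervals `[lo l, hi l]` with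
disjoint interiors inside `[-C, C]`, and the lengths of these intervals add up to at most the
Lebesgue measure `2C` of `[-C, C]`. -/

open Finset

/-- Mean of the coordinates of `b` assigned to group `l` by the assignment `g`. -/
noncomputable def groupMean {p k : ℕ} (b : Fin p → ℝ) (g : Fin p → Fin k) (l : Fin k) : ℝ :=
  (∑ j ∈ Finset.univ.filter (fun j => g j = l), b j) /
    ((Finset.univ.filter (fun j => g j = l)).card : ℝ)

/-- Total within-group sum of squared deviations from group means. -/
noncomputable def kmeansCost {p k : ℕ} (b : Fin p → ℝ) (g : Fin p → Fin k) : ℝ :=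
  ∑ j, (b j - groupMean b g (g j)) ^ 2

namespace Finset

variable {ι : Type*} (s : Finset ι) (f : ι → ℝ)

theorem sum_sub_sum_div_card : ∑ i ∈ s, (f i - (∑ j ∈ s, f j) / #s) = 0 := by
  rcases s.eq_empty_or_nonempty with rfl | hs
  · simp
  rw [sum_sub_distrib, sum_const, nsmul_eq_mul, mul_div_cancel₀ _ (by positivity), sub_self]

theorem sum_sq_sub_eq_sum_sq_sub_mean_add (c : ℝ) :
    ∑ i ∈ s, (f i - c) ^ 2 =
      ∑ i ∈ s, (f i - (∑ j ∈ s, f j) / #s) ^ 2 + (∑ i ∈ s, (f i - c)) ^ 2 / #s := by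
  rcases s.eq_empty_or_nonempty with rfl | hs
  · simp
  set m := (∑ j ∈ s, f j) / #s
  have hm := s.sum_sub_sum_div_card f
  have hlin : ∑ i ∈ s, (f i - c) = #s * (m - c) := by
    rw [sum_congr rfl fun i _ => (sub_add_sub_cancel (f i) m c).symm, sum_add_distrib, hm,
      sum_const, nsmul_eq_mul, zero_add]
  have hsq : ∑ i ∈ s, (f i - c) ^ 2 = ∑ i ∈ s, (f i - m) ^ 2 + #s * (m - c) ^ 2 := by
    calc ∑ i ∈ s, (f i - c) ^ 2
        = ∑ i ∈ s, ((f i - m) ^ 2 + 2 * (m - c) * (f i - m) + (m - c) ^ 2) :=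
          sum_congr rfl fun i _ => by ring
      _ = _ := by
          rw [sum_add_distrib, sum_add_distrib, ← mul_sum, hm, sum_const, nsmul_eq_mul]
          ring
  rw [hsq, hlin]
  field_simp [hs.card_pos.ne']

theorem sum_comp_swap_of_mem_of_notMem [DecidableEq ι] {i j : ι} (hi : i ∈ s) (hj : j ∉ s) :
    ∑ x ∈ s, f (Equiv.swap i j x) = ∑ x ∈ s, f x + (f j - f i) := by
  rw [← sub_eq_iff_eq_add', ← sum_sub_distrib, sum_eq_single_of_mem i hi, Equiv.swap_apply_left]
  intro x hx hxi
  rw [Equiv.swap_apply_of_ne_of_ne hxi (ne_of_mem_of_not_mem hx hj), sub_self]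

end Finset

theorem Fintype.sum_sq_sub_comp_swap {ι : Type*} [Fintype ι] [DecidableEq ι] (f c : ι → ℝ)
    {i j : ι} (hij : i ≠ j) :
    ∑ x, (f (Equiv.swap i j x) - c x) ^ 2 =
      ∑ x, (f x - c x) ^ 2 + 2 * (f i - f j) * (c i - c j) := by
  rw [← sub_eq_iff_eq_add', ← sum_sub_distrib, sum_eq_add_of_mem i j (mem_univ _) (mem_univ _) hij,
    Equiv.swap_apply_left, Equiv.swap_apply_right]
  · ring
  · rintro x - ⟨hxi, hxj⟩
    rw [Equiv.swap_apply_of_ne_of_ne hxi hxj, sub_self]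

theorem sum_sub_le_of_pairwise_disjoint_Ioo {ι : Type*} [Fintype ι] {lo hi : ι → ℝ} {a b : ℝ}
    (hle : ∀ i, lo i ≤ hi i)
    (hdisj : Pairwise fun i j => Disjoint (Set.Ioo (lo i) (hi i)) (Set.Ioo (lo j) (hi j)))
    (hlo : ∀ i, a ≤ lo i) (hhi : ∀ i, hi i ≤ b) (hab : a ≤ b) :
    ∑ i, (hi i - lo i) ≤ b - a := by
  open MeasureTheory in
  have hvol : ∑ i, ENNReal.ofReal (hi i - lo i) ≤ ENNReal.ofReal (b - a) :=
    calc ∑ i, ENNReal.ofReal (hi i - lo i) = volume (⋃ i, Set.Ioo (lo i) (hi i)) := by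
          rw [measure_iUnion hdisj fun _ => measurableSet_Ioo, tsum_fintype]
          simp only [Real.volume_Ioo]
      _ ≤ volume (Set.Icc a b) := measure_mono <| Set.iUnion_subset fun i =>
          Set.Ioo_subset_Icc_self.trans (Set.Icc_subset_Icc (hlo i) (hhi i))
      _ = ENNReal.ofReal (b - a) := Real.volume_Icc
  rwa [← ENNReal.ofReal_sum_of_nonneg fun i _ => sub_nonneg.2 (hle i),
    ENNReal.ofReal_le_ofReal_iff (sub_nonneg.2 hab)] at hvol

section KMeans

variable {p k : ℕ} (b : Fin p → ℝ) (g : Fin p → Fin k)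

theorem sum_sub_groupMean_eq_zero (l : Fin k) :
    ∑ j ∈ univ with g j = l, (b j - groupMean b g l) = 0 :=
  sum_sub_sum_div_card _ _

theorem sum_sq_sub_eq_kmeansCost_add (c : Fin k → ℝ) :
    ∑ j, (b j - c (g j)) ^ 2 =
      kmeansCost b g + ∑ l, (∑ j ∈ univ with g j = l, (b j - c l)) ^ 2 / #{j | g j = l} := by
  rw [kmeansCost, ← sum_fiberwise univ g, ← sum_fiberwise univ g, ← sum_add_distrib]
  refine sum_congr rfl fun l _ => ?_
  have hfib : ∀ F : Fin k → ℝ, ∑ j ∈ univ with g j = l, (b j - F (g j)) ^ 2 =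
      ∑ j ∈ univ with g j = l, (b j - F l) ^ 2 :=
    fun F => sum_congr rfl fun j hj => by rw [(mem_filter.1 hj).2]
  rw [hfib, hfib]
  exact sum_sq_sub_eq_sum_sq_sub_mean_add _ _ _

theorem kmeansCost_lt_sum_sq_sub (c : Fin k → ℝ) {l : Fin k}
    (hl : ∑ j ∈ univ with g j = l, (b j - c l) ≠ 0) :
    kmeansCost b g < ∑ j, (b j - c (g j)) ^ 2 := by
  rw [sum_sq_sub_eq_kmeansCost_add, lt_add_iff_pos_right]
  refine sum_pos' (fun _ _ => by positivity) ⟨l, mem_univ _, div_pos (by positivity) ?_⟩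
  exact_mod_cast card_pos.2 (nonempty_of_sum_ne_zero hl)

theorem kmeansCost_comp_perm (σ : Equiv.Perm (Fin p)) :
    kmeansCost (b ∘ σ) (g ∘ σ) = kmeansCost b g := by
  have hfib : ∀ l i, i ∈ ({j | g (σ j) = l} : Finset _) ↔ σ i ∈ ({j | g j = l} : Finset _) :=
    by simp
  have hmean : ∀ l, groupMean (b ∘ σ) (g ∘ σ) l = groupMean b g l := fun l => by
    simp only [groupMean, Function.comp_apply]
    rw [sum_equiv σ (hfib l) fun _ _ => rfl, card_equiv σ (hfib l)]
  simp only [kmeansCost, hmean, Function.comp_apply]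
  exact Equiv.sum_comp σ fun j => (b j - groupMean b g (g j)) ^ 2

variable {b g}

theorem le_of_groupMean_le_of_optimal (hsurj : Function.Surjective g)
    (hopt : ∀ g' : Fin p → Fin k, Function.Surjective g' → kmeansCost b g ≤ kmeansCost b g')
    {i j : Fin p} (hij : g i ≠ g j) (hμ : groupMean b g (g i) ≤ groupMean b g (g j)) :
    b i ≤ b j := by
  by_contra! hlt
  set μ := groupMean b g
  have hne : i ≠ j := fun h => hij (congrArg g h)
  set σ := Equiv.swap i j
  -- Relabelling the points by `σ` turns exchanging the groups of `i` and `j` into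
  -- exchanging their values.
  have hswap : kmeansCost (b ∘ σ) g = kmeansCost b (g ∘ σ) := by
    rw [← kmeansCost_comp_perm (b ∘ σ) g σ]
    simp [Function.comp_def, σ]
  have hshift : ∑ x ∈ univ with g x = g i, (b (σ x) - μ (g i)) ≠ 0 := by
    rw [sum_comp_swap_of_mem_of_notMem _ (fun x => b x - μ (g i)) (by simp) (by simp [hij.symm]),
      sum_sub_groupMean_eq_zero]
    intro h
    linarith
  have hgain : 2 * (b i - b j) * (μ (g i) - μ (g j)) ≤ 0 :=
    mul_nonpos_of_nonneg_of_nonpos (by linarith) (by linarith)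
  have hswapped : ∑ x, ((b ∘ σ) x - μ (g x)) ^ 2 =
      kmeansCost b g + 2 * (b i - b j) * (μ (g i) - μ (g j)) :=
    Fintype.sum_sq_sub_comp_swap b (fun x => μ (g x)) hne
  have hlt' := kmeansCost_lt_sum_sq_sub (b ∘ σ) g μ hshift
  have hle := hopt _ (hsurj.comp σ.surjective)
  linarith

theorem sup'_le_inf'_of_optimal (hsurj : Function.Surjective g)
    (hopt : ∀ g' : Fin p → Fin k, Function.Surjective g' → kmeansCost b g ≤ kmeansCost b g')
    {l l' : Fin k} (hll : l ≠ l') (hμ : groupMean b g l ≤ groupMean b g l')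
    (hl : (univ.filter (g · = l)).Nonempty) (hl' : (univ.filter (g · = l')).Nonempty) :
    (univ.filter (g · = l)).sup' hl b ≤ (univ.filter (g · = l')).inf' hl' b := by
  refine sup'_le _ _ fun x hx => le_inf' _ _ fun y hy => ?_
  obtain ⟨-, rfl⟩ := mem_filter.1 hx
  obtain ⟨-, rfl⟩ := mem_filter.1 hy
  exact le_of_groupMean_le_of_optimal hsurj hopt hll hμ

end KMeans

/-- Fisher contiguity and the diameter bound: the groups of an optimal 1-D
`k`-means partition of points `b ∈ [-C,C]^p` are contiguous — each group lies in an interval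
`[lo l, hi l]`, the intervals for distinct groups have disjoint interiors, every within-group
distance is at most the interval length — and consequently the sum over groups of the group
diameters (max minus min of the group) is at most `2C`. -/
theorem stmt19 {p k : ℕ} (C : ℝ) (hC : 0 < C)
    (b : Fin p → ℝ) (hb : ∀ j, b j ∈ Set.Icc (-C) C)
    (g : Fin p → Fin k) (hsurj : Function.Surjective g)
    (hopt : ∀ g' : Fin p → Fin k, Function.Surjective g' → kmeansCost b g ≤ kmeansCost b g') :
    (∃ lo hi : Fin k → ℝ,
      (∀ l, lo l ≤ hi l) ∧
      (∀ j, b j ∈ Set.Icc (lo (g j)) (hi (g j))) ∧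
      (Pairwise fun l l' => Disjoint (Set.Ioo (lo l) (hi l)) (Set.Ioo (lo l') (hi l'))) ∧
      (∀ l j j', g j = l → g j' = l → |b j - b j'| ≤ hi l - lo l) ∧
      (∑ l, (hi l - lo l)) ≤ 2 * C) ∧
    (∑ l, (((Finset.univ.filter (fun j => g j = l)).sup'
              (by obtain ⟨j, hj⟩ := hsurj l
                  exact ⟨j, Finset.mem_filter.mpr ⟨Finset.mem_univ j, hj⟩⟩) b) -
           ((Finset.univ.filter (fun j => g j = l)).inf'
              (by obtain ⟨j, hj⟩ := hsurj l
                  exact ⟨j, Finset.mem_filter.mpr ⟨Finset.mem_univ j, hj⟩⟩) b)))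
      ≤ 2 * C := by
  have hne : ∀ l, (univ.filter (g · = l)).Nonempty := fun l =>
    let ⟨j, hj⟩ := hsurj l
    ⟨j, mem_filter.2 ⟨mem_univ j, hj⟩⟩
  set lo : Fin k → ℝ := fun l => (univ.filter (g · = l)).inf' (hne l) b
  set hi : Fin k → ℝ := fun l => (univ.filter (g · = l)).sup' (hne l) b
  have hmem : ∀ j, b j ∈ Set.Icc (lo (g j)) (hi (g j)) := fun j =>
    have hj : j ∈ univ.filter (g · = g j) := mem_filter.2 ⟨mem_univ j, rfl⟩
    ⟨inf'_le b hj, le_sup' b hj⟩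
  have hlo_le_hi : ∀ l, lo l ≤ hi l := fun l => by
    obtain ⟨j, rfl⟩ := hsurj l
    exact (hmem j).1.trans (hmem j).2
  have hdisj : Pairwise fun l l' => Disjoint (Set.Ioo (lo l) (hi l)) (Set.Ioo (lo l') (hi l')) :=
    fun l l' hll => Set.Ioo_disjoint_Ioo.2 <| by
      rcases le_total (groupMean b g l) (groupMean b g l') with hμ | hμ
      · exact min_le_of_left_le <|
          (sup'_le_inf'_of_optimal hsurj hopt hll hμ _ _).trans (le_max_right _ _)
      · exact min_le_of_right_le <|
          (sup'_le_inf'_of_optimal hsurj hopt hll.symm hμ _ _).trans (le_max_left _ _)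
  have hsum : ∑ l, (hi l - lo l) ≤ 2 * C := by
    have := sum_sub_le_of_pairwise_disjoint_Ioo hlo_le_hi hdisj
      (fun l => le_inf' _ _ fun j _ => (hb j).1) (fun l => sup'_le _ _ fun j _ => (hb j).2)
      (by linarith : -C ≤ C)
    linarith
  refine ⟨⟨lo, hi, hlo_le_hi, hmem, hdisj, fun l j j' hj hj' => ?_, hsum⟩, hsum⟩
  have hj₁ := hmem j
  have hj₂ := hmem j'
  rw [hj] at hj₁
  rw [hj'] at hj₂
  exact abs_sub_le_iff.2 ⟨by linarith [hj₁.2, hj₂.1], by linarith [hj₁.1, hj₂.2]⟩
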